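/- Let r be a regular expression over an alphabet Δ and a ∈ Δ. If the partial Brzozowski derivative deriv(a,r) is defined, then L_inf(deriv(a,r)) = {w ∈ Δ^ω | a·w ∈ L_inf(r)}. If deriv(a,r) is undefined, then {w ∈ Δ^ω | a·w ∈ L_inf(r)} = ∅. -/

import Mathlib

set_option maxHeartbeats 1000000
set_option autoImplicit false

universe u v w

namespace AMP

/-- Events: `send p q m` means participant `p` sends message `m` to `q`;
`recv p q m` means participant `q` receives message `m` that was sent by `p`. -/
inductive Ev (P : Type u) (V : Type v) : Type (max u v) where
  | send : P → P → V → Ev P V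
  | recv : P → P → V → Ev P V
deriving DecidableEq

namespace Ev
variable {P : Type u} {V : Type v}
/-- The events in which participant `r` is active (the alphabet `Σ_r`). -/
def Active (r : P) : Ev P V → Prop
  | .send p _ _ => p = r
  | .recv _ q _ => q = r
end Ev

/-- Finite or infinite words: `Σ^∞ = Σ* ∪ Σ^ω`. -/
abbrev Word (E : Type w) := List E ⊕ (ℕ → E)

namespace Word
variable {E : Type w}
/-- First `n` letters of a word, as a finite list. -/
def take : Word E → ℕ → List E
  | .inl u, n => u.take n
  | .inr f, n => (List.range n).map f
/-- The letter at position `n`, if any. -/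
def get? : Word E → ℕ → Option E
  | .inl u, n => u[n]?
  | .inr f, n => some (f n)
/-- `u` is a (finite) prefix of the word `w`. -/
def IsPref (u : List E) (w : Word E) : Prop := take w u.length = u
/-- Prepend a letter to a word. -/
def cons (a : E) : Word E → Word E
  | .inl u => .inl (a :: u)
  | .inr f => .inr fun n => match n with | 0 => a | k+1 => f k
end Word

/-- `pref L`: the set of finite prefixes of words of `L`. -/
def pref {E : Type w} (L : Set (Word E)) : Set (List E) := {u | ∃ w ∈ L, Word.IsPref u w}

/-- `first(L) = pref(L) ∩ Σ`: first letters of words of `L`. -/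
def firstL {E : Type w} (L : Set (Word E)) : Set E := {a | [a] ∈ pref L}

/-- Regular expressions over an alphabet `Δ`. -/
inductive RE (Δ : Type w) : Type w where
  | eps : RE Δ
  | ch : Δ → RE Δ
  | plus : RE Δ → RE Δ → RE Δ
  | cat : RE Δ → RE Δ → RE Δ
  | star : RE Δ → RE Δ

namespace RE
variable {Δ : Type w}

/-- The finite-word language of a regular expression. -/
def finLang : RE Δ → Language Δ
  | .eps => 1
  | .ch a => {[a]}
  | .plus r s => finLang r + finLang s
  | .cat r s => finLang r * finLang s
  | .star r => KStar.kstar (finLang r)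

/-- The infinite-word language: infinite words all of whose finite prefixes are
prefixes of finite words of the expression. -/
def infLang (r : RE Δ) : Set (ℕ → Δ) :=
  {f | ∀ n, ∃ w ∈ finLang r, (List.range n).map f <+: w}

/-- The full language `L(r) = L_fin(r) ∪ L_inf(r)` as a set of words. -/
def lang (r : RE Δ) : Set (Word Δ) :=
  {w | (∃ u, w = Sum.inl u ∧ u ∈ finLang r) ∨ ∃ f, w = Sum.inr f ∧ f ∈ infLang r}

/-- The symbol `ε` does not occur in the expression. -/
def epsFree : RE Δ → Prop
  | .eps => False
  | .ch _ => True
  | .plus r s => epsFree r ∧ epsFree s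
  | .cat r s => epsFree r ∧ epsFree s
  | .star r => epsFree r

/-- Partial union, absorbing undefined arguments. -/
def oplus : Option (RE Δ) → Option (RE Δ) → Option (RE Δ)
  | some r, some s => some (.plus r s)
  | some r, none => some r
  | none, x => x

/-- The partial Brzozowski derivative. -/
noncomputable def deriv [DecidableEq Δ] (a : Δ) : RE Δ → Option (RE Δ)
  | .eps => none
  | .ch b => if b = a then some .eps else none
  | .plus r s => oplus (deriv a r) (deriv a s)
  | .cat r s =>
      haveI : Decidable (([] : List Δ) ∈ finLang r) := Classical.propDecidable _
      if ([] : List Δ) ∈ finLang r then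
        oplus ((deriv a r).map fun r' => RE.cat r' s) (deriv a s)
      else (deriv a r).map fun r' => RE.cat r' s
  | .star r => (deriv a r).map fun r' => RE.cat r' (RE.star r)

/-- Marking: replace each letter occurrence by a copy carrying a distinct index
(threading a counter left to right). -/
def markAux : RE Δ → ℕ → RE (Δ × ℕ) × ℕ
  | .eps, n => (.eps, n)
  | .ch a, n => (.ch (a, n), n+1)
  | .plus r s, n =>
      let pr := markAux r n
      let ps := markAux s pr.2
      (.plus pr.1 ps.1, ps.2)
  | .cat r s, n =>
      let pr := markAux r n
      let ps := markAux s pr.2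
      (.cat pr.1 ps.1, ps.2)
  | .star r, n =>
      let pr := markAux r n
      (.star pr.1, pr.2)

def mark (r : RE Δ) : RE (Δ × ℕ) := (markAux r 0).1
end RE

/-- A sender-driven regular expression over the event alphabet: any two distinct
marked letters enabled after a common prefix of `L(mark r)` are distinct send
events of a common sender. -/
def SenderDrivenRE {P : Type u} {V : Type v} (r : RE (Ev P V)) : Prop :=
  ∀ (u : List (Ev P V × ℕ)) (x y : Ev P V × ℕ),
    u ++ [x] ∈ pref (RE.lang (RE.mark r)) →
    u ++ [y] ∈ pref (RE.lang (RE.mark r)) →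
    x ≠ y →
    x.1 ≠ y.1 ∧ ∃ p : P, (∃ q m, x.1 = Ev.send p q m) ∧ ∃ q m, y.1 = Ev.send p q m

/-- Prepend a letter to an infinite word. -/
def icons {E : Type w} (a : E) (f : ℕ → E) : ℕ → E
  | 0 => a
  | n+1 => f n

/-! By Brzozowski's theorem, `L_fin (deriv a r)` is the left quotient of `L_fin r` by `a`, an
undefined derivative standing for `∅`. The infinite language is the adherence of the finite one,
and adherence commutes with left quotients: the prefixes of `a·f` of positive length are exactly
`a` followed by the prefixes of `f`. -/

end AMP

namespace Language

variable {α : Type*} (a : α) (l m : Language α)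

theorem leftQuotient_add (x : List α) :
    (l + m).leftQuotient x = l.leftQuotient x + m.leftQuotient x :=
  rfl

theorem leftQuotient_singleton_one : (1 : Language α).leftQuotient [a] = 0 := by
  ext w
  simp [mem_leftQuotient, mem_one, notMem_zero]

theorem leftQuotient_singleton_singleton [DecidableEq α] (b : α) :
    ({[b]} : Language α).leftQuotient [a] = if b = a then 1 else 0 := by
  ext w
  change a :: w = [b] ↔ _
  split_ifs with hb
  · simp [hb, mem_one]
  · simp [Ne.symm hb, notMem_zero]

theorem mem_leftQuotient_singleton_mul {w : List α} :
    w ∈ (l * m).leftQuotient [a] ↔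
      w ∈ l.leftQuotient [a] * m ∨ [] ∈ l ∧ w ∈ m.leftQuotient [a] := by
  simp only [mem_leftQuotient, mem_mul, List.singleton_append]
  constructor
  · rintro ⟨x, hx, y, hy, hxy⟩
    rcases List.append_eq_cons_iff.mp hxy with ⟨rfl, rfl⟩ | ⟨u, rfl, rfl⟩
    · exact Or.inr ⟨hx, hy⟩
    · exact Or.inl ⟨u, hx, y, hy, rfl⟩
  · rintro (⟨u, hu, y, hy, rfl⟩ | ⟨hnil, hw⟩)
    · exact ⟨a :: u, hu, y, hy, rfl⟩
    · exact ⟨[], hnil, a :: w, hw, rfl⟩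

theorem leftQuotient_singleton_mul_of_nil_mem (h : [] ∈ l) :
    (l * m).leftQuotient [a] = l.leftQuotient [a] * m + m.leftQuotient [a] := by
  ext w
  rw [mem_leftQuotient_singleton_mul, mem_add]
  simp only [h, true_and]

theorem leftQuotient_singleton_mul_of_nil_notMem (h : [] ∉ l) :
    (l * m).leftQuotient [a] = l.leftQuotient [a] * m := by
  ext w
  rw [mem_leftQuotient_singleton_mul]
  simp only [h, false_and, or_false]

theorem leftQuotient_singleton_kstar :
    (KStar.kstar l).leftQuotient [a] = l.leftQuotient [a] * KStar.kstar l := by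
  ext w
  constructor
  · intro hw
    -- split `a :: w` into nonempty factors; the first one starts with `a`
    obtain ⟨S, hS, hmem⟩ := mem_kstar_iff_exists_nonempty.mp hw
    obtain _ | ⟨x, S⟩ := S
    · cases hS
    obtain ⟨hx, hx_ne⟩ := hmem x List.mem_cons_self
    rcases List.cons_eq_append_iff.mp hS with ⟨rfl, -⟩ | ⟨u, rfl, rfl⟩
    · exact absurd rfl hx_ne
    · exact append_mem_mul hx
        (join_mem_kstar fun y hy => (hmem y (List.mem_cons_of_mem _ hy)).1)
  · intro hw
    rw [mem_leftQuotient, ← one_add_self_mul_kstar_eq_kstar]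
    obtain ⟨u, hu, v, hv, rfl⟩ := mem_mul.mp hw
    rw [← List.append_assoc]
    exact Or.inr (append_mem_mul hu hv)

/-- The adherence of `l`, in the sense of Nivat. -/
def adherence (l : Language α) : Set (ℕ → α) :=
  {f | ∀ n, ∃ w ∈ l, (List.range n).map f <+: w}

theorem adherence_zero : adherence (0 : Language α) = ∅ := by
  ext f
  simp [adherence, notMem_zero]

end Language

namespace AMP

theorem map_range_succ_icons {E : Type w} (a : E) (f : ℕ → E) (n : ℕ) :
    (List.range (n + 1)).map (icons a f) = a :: (List.range n).map f := by
  rw [List.range_succ_eq_map, List.map_cons, List.map_map]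
  rfl

theorem icons_mem_adherence_iff {E : Type w} {l : Language E} {a : E} {f : ℕ → E} :
    icons a f ∈ l.adherence ↔ f ∈ (l.leftQuotient [a]).adherence := by
  constructor
  · intro h n
    obtain ⟨w, hw, hpre⟩ := h (n + 1)
    rw [map_range_succ_icons] at hpre
    obtain ⟨v, rfl, hv⟩ := List.cons_prefix_iff.mp hpre
    exact ⟨v, hw, hv⟩
  · rintro h (_ | n)
    · obtain ⟨w, hw, -⟩ := h 0
      exact ⟨a :: w, hw, List.nil_prefix⟩
    · obtain ⟨w, hw, hpre⟩ := h n
      rw [map_range_succ_icons]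
      exact ⟨a :: w, hw, List.cons_prefix_cons.mpr ⟨rfl, hpre⟩⟩

namespace RE

variable {Δ : Type w}

def finLangOpt (o : Option (RE Δ)) : Language Δ :=
  o.elim 0 finLang

theorem finLangOpt_oplus (o₁ o₂ : Option (RE Δ)) :
    finLangOpt (oplus o₁ o₂) = finLangOpt o₁ + finLangOpt o₂ := by
  cases o₁ <;> cases o₂ <;> simp [oplus, finLangOpt, finLang]

theorem finLangOpt_map_cat (o : Option (RE Δ)) (s : RE Δ) :
    finLangOpt (o.map fun r => cat r s) = finLangOpt o * finLang s := by
  cases o <;> simp [finLangOpt, finLang]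

theorem leftQuotient_finLang [DecidableEq Δ] (a : Δ) (r : RE Δ) :
    (finLang r).leftQuotient [a] = finLangOpt (deriv a r) := by
  induction r with
  | eps => exact Language.leftQuotient_singleton_one a
  | ch b =>
    rw [finLang, Language.leftQuotient_singleton_singleton, deriv]
    split_ifs <;> rfl
  | plus r s ihr ihs =>
    rw [finLang, deriv, finLangOpt_oplus, Language.leftQuotient_add, ihr, ihs]
  | cat r s ihr ihs =>
    rw [finLang, deriv]
    split_ifs with h
    · rw [Language.leftQuotient_singleton_mul_of_nil_mem _ _ _ h, finLangOpt_oplus,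
        finLangOpt_map_cat, ihr, ihs]
    · rw [Language.leftQuotient_singleton_mul_of_nil_notMem _ _ _ h, finLangOpt_map_cat, ihr]
  | star r ihr =>
    rw [finLang, deriv, Language.leftQuotient_singleton_kstar, finLangOpt_map_cat, ihr]
    rfl

theorem infLang_eq_adherence (r : RE Δ) : infLang r = (finLang r).adherence :=
  rfl

end RE

/-- If the partial Brzozowski derivative `deriv a r` is defined
then `L_inf(deriv a r) = {w | a·w ∈ L_inf r}`; if it is undefined then
`{w | a·w ∈ L_inf r} = ∅`. -/
theorem deriv_infLang {Δ : Type w} [DecidableEq Δ] (r : RE Δ) (a : Δ) :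
    (∀ r', RE.deriv a r = some r' → RE.infLang r' = {f | icons a f ∈ RE.infLang r}) ∧
    (RE.deriv a r = none → {f : ℕ → Δ | icons a f ∈ RE.infLang r} = ∅) := by
  have key : {f | icons a f ∈ RE.infLang r} = (RE.finLangOpt (RE.deriv a r)).adherence := by
    ext f
    rw [Set.mem_ofPred_eq, RE.infLang_eq_adherence, icons_mem_adherence_iff,
      RE.leftQuotient_finLang]
  refine ⟨fun r' hr' => ?_, fun hnone => ?_⟩
  · rw [key, hr']
    rfl
  · rw [key, hnone]
    exact Language.adherence_zero

end AMP
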